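/- For every integer w ≥ 1, the number of ternary (n = 3) operator monomials of weight w and multiplicity w−1 equals the tetrahedral number C(w+2, 3), where C(·,·) denotes the binomial coefficient. (Equivalently, in the notation N_n(w,m) for the number of n-ary operator monomials of weight w and multiplicity m, one has N_3(w, w−1) = C(w+2, 3), giving the values 1, 4, 10, 20, 35, … .) -/

import Mathlib

mutual
/-- An atom of an `n`-ary operator monomial: either the indeterminate symbol `∗`
or `L(M)` for an operator monomial `M`. -/
inductive OpAtom (n : ℕ) : Type
  | star : OpAtom n
  | op : OpMon n → OpAtom n

/-- A vector of `k` atoms. -/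
inductive OpAtomVec (n : ℕ) : ℕ → Type
  | nil : OpAtomVec n 0
  | cons : {k : ℕ} → OpAtom n → OpAtomVec n k → OpAtomVec n (k + 1)

/-- An `n`-ary operator monomial (in flattened normal form with respect to `n`-ary
associativity): a nonempty list of atoms whose length is congruent to `1` modulo `n-1`. -/
inductive OpMon (n : ℕ) : Type
  | mk : (k : ℕ) → 1 ≤ k → k % (n - 1) = 1 % (n - 1) → OpAtomVec n k → OpMon n
end

mutual
/-- Weight (total number of operations) of an atom. -/
def OpAtom.weight {n : ℕ} : OpAtom n → ℕ
  | .star => 0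
  | .op m => 1 + m.weight

/-- Sum of the weights of a vector of atoms. -/
def OpAtomVec.weight {n : ℕ} : {k : ℕ} → OpAtomVec n k → ℕ
  | _, .nil => 0
  | _, .cons a v => a.weight + v.weight

/-- Weight of an operator monomial `[A_1, …, A_k]`: the number `(k-1)/(n-1)` of `n`-ary
products needed to form a product of `k` factors, plus the weights of the atoms. -/
def OpMon.weight {n : ℕ} : OpMon n → ℕ
  | .mk k _ _ v => (k - 1) / (n - 1) + v.weight
end

mutual
/-- Multiplicity (number of occurrences of the operator symbol `L`) of an atom. -/
def OpAtom.mult {n : ℕ} : OpAtom n → ℕ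
  | .star => 0
  | .op m => 1 + m.mult

/-- Total multiplicity of a vector of atoms. -/
def OpAtomVec.mult {n : ℕ} : {k : ℕ} → OpAtomVec n k → ℕ
  | _, .nil => 0
  | _, .cons a v => a.mult + v.mult

/-- Multiplicity of an operator monomial. -/
def OpMon.mult {n : ℕ} : OpMon n → ℕ
  | .mk _ _ _ v => v.mult
end

mutual
/-- Degree (number of occurrences of the indeterminate `∗`) of an atom. -/
def OpAtom.degree {n : ℕ} : OpAtom n → ℕ
  | .star => 1
  | .op m => m.degree

/-- Total degree of a vector of atoms. -/
def OpAtomVec.degree {n : ℕ} : {k : ℕ} → OpAtomVec n k → ℕ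
  | _, .nil => 0
  | _, .cons a v => a.degree + v.degree

/-- Degree of an operator monomial. -/
def OpMon.degree {n : ℕ} : OpMon n → ℕ
  | .mk _ _ _ v => v.degree
end

/-! Every operation of a monomial is either an occurrence of `L` or one of its `n`-ary products,
so weight = multiplicity + number of products, and weight `m + 1` with multiplicity `m` means
exactly one product. A monomial without products is a tower `[L^j(∗)]`; one with exactly one
product is `L^t` applied to a product `[L^{a₁}(∗), …, L^{aₙ}(∗)]` of towers, where `L(M)` stands
for the one-atom monomial `[L(M)]`. Its multiplicity is `t + a₁ + ⋯ + aₙ`, so by stars and bars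
there are `C(m + n, n)` of them. -/

theorem Nat.eq_mul_div_add_one_of_mod_eq {k d : ℕ} (hk : 1 ≤ k) (h : k % d = 1 % d) :
    k = d * ((k - 1) / d) + 1 := by
  have := Nat.div_add_mod (k - 1) d
  rw [Nat.sub_mod_eq_zero_of_mod_eq h] at this
  omega

section

variable {n : ℕ}

mutual
def OpAtom.numProducts : OpAtom n → ℕ
  | .star => 0
  | .op M => M.numProducts

def OpAtomVec.numProducts : {k : ℕ} → OpAtomVec n k → ℕ
  | _, .nil => 0
  | _, .cons a v => a.numProducts + v.numProducts

def OpMon.numProducts : OpMon n → ℕ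
  | .mk k _ _ v => (k - 1) / (n - 1) + v.numProducts
end

mutual
theorem OpAtom.weight_eq_mult_add_numProducts :
    ∀ A : OpAtom n, A.weight = A.mult + A.numProducts
  | .star => rfl
  | .op M => by
    simp only [OpAtom.weight, OpAtom.mult, OpAtom.numProducts,
      OpMon.weight_eq_mult_add_numProducts M]
    omega

theorem OpAtomVec.weight_eq_mult_add_numProducts :
    ∀ {k : ℕ} (v : OpAtomVec n k), v.weight = v.mult + v.numProducts
  | _, .nil => rfl
  | _, .cons a v => by
    simp only [OpAtomVec.weight, OpAtomVec.mult, OpAtomVec.numProducts,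
      a.weight_eq_mult_add_numProducts, v.weight_eq_mult_add_numProducts]
    omega

theorem OpMon.weight_eq_mult_add_numProducts :
    ∀ M : OpMon n, M.weight = M.mult + M.numProducts
  | .mk k _ _ v => by
    simp only [OpMon.weight, OpMon.mult, OpMon.numProducts, v.weight_eq_mult_add_numProducts]
    omega
end

def OpMon.single (a : OpAtom n) : OpMon n := .mk 1 le_rfl rfl (.cons a .nil)

def OpAtom.chain : ℕ → OpAtom n
  | 0 => .star
  | j + 1 => .op (.single (chain j))

def OpAtomVec.chains : {k : ℕ} → (Fin k → ℕ) → OpAtomVec n k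
  | 0, _ => .nil
  | _ + 1, f => .cons (.chain (f 0)) (chains (Fin.tail f))

def OpMon.mulChains (hn : 1 ≤ n) (f : Fin n → ℕ) : OpMon n :=
  .mk n hn (by obtain ⟨d, rfl⟩ := Nat.exists_eq_add_of_le' hn; simp) (.chains f)

def OpMon.iterateL : ℕ → OpMon n → OpMon n
  | 0, M => M
  | t + 1, M => .single (.op (iterateL t M))

theorem OpAtom.chain_mult : ∀ j, (OpAtom.chain j : OpAtom n).mult = j
  | 0 => rfl
  | j + 1 => by
    simp [OpAtom.chain, OpAtom.mult, OpMon.single, OpMon.mult, OpAtomVec.mult,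
      OpAtom.chain_mult j, add_comm]

theorem OpAtom.chain_numProducts : ∀ j, (OpAtom.chain j : OpAtom n).numProducts = 0
  | 0 => rfl
  | j + 1 => by
    simp [OpAtom.chain, OpAtom.numProducts, OpMon.single, OpMon.numProducts,
      OpAtomVec.numProducts, OpAtom.chain_numProducts j]

theorem OpAtom.chain_injective : Function.Injective (OpAtom.chain : ℕ → OpAtom n) :=
  fun i j h => by simpa [OpAtom.chain_mult] using congrArg OpAtom.mult h

theorem OpAtomVec.chains_mult :
    ∀ {k : ℕ} (f : Fin k → ℕ), (OpAtomVec.chains f : OpAtomVec n k).mult = ∑ i, f i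
  | 0, _ => rfl
  | _ + 1, f => by
    simp [OpAtomVec.chains, OpAtomVec.mult, OpAtom.chain_mult,
      OpAtomVec.chains_mult (Fin.tail f), Fin.sum_univ_succ, Fin.tail]

theorem OpAtomVec.chains_numProducts :
    ∀ {k : ℕ} (f : Fin k → ℕ), (OpAtomVec.chains f : OpAtomVec n k).numProducts = 0
  | 0, _ => rfl
  | _ + 1, f => by
    simp [OpAtomVec.chains, OpAtomVec.numProducts, OpAtom.chain_numProducts,
      OpAtomVec.chains_numProducts (Fin.tail f)]

theorem OpAtomVec.chains_injective :
    ∀ {k : ℕ}, Function.Injective (OpAtomVec.chains : (Fin k → ℕ) → OpAtomVec n k)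
  | 0, f, g, _ => Subsingleton.elim f g
  | _ + 1, f, g, h => by
    simp only [OpAtomVec.chains, OpAtomVec.cons.injEq] at h
    rw [← Fin.cons_self_tail f, ← Fin.cons_self_tail g, OpAtom.chain_injective h.1,
      OpAtomVec.chains_injective h.2]

theorem OpMon.mulChains_mult (hn : 1 ≤ n) (f : Fin n → ℕ) :
    (OpMon.mulChains hn f).mult = ∑ i, f i :=
  OpAtomVec.chains_mult f

theorem OpMon.mulChains_numProducts (hn : 2 ≤ n) (f : Fin n → ℕ) :
    (OpMon.mulChains (by omega) f).numProducts = 1 := by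
  simp only [OpMon.mulChains, OpMon.numProducts, OpAtomVec.chains_numProducts, add_zero]
  exact Nat.div_self (by omega)

theorem OpMon.mulChains_injective (hn : 1 ≤ n) : Function.Injective (OpMon.mulChains hn) :=
  fun f g h => by
    simp only [OpMon.mulChains, OpMon.mk.injEq, heq_eq_eq, true_and] at h
    exact OpAtomVec.chains_injective h

theorem OpMon.iterateL_mult (M : OpMon n) : ∀ t, (M.iterateL t).mult = t + M.mult
  | 0 => by simp [OpMon.iterateL]
  | t + 1 => by
    simp [OpMon.iterateL, OpMon.single, OpMon.mult, OpAtomVec.mult, OpAtom.mult,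
      OpMon.iterateL_mult M t]
    omega

theorem OpMon.iterateL_numProducts (M : OpMon n) :
    ∀ t, (M.iterateL t).numProducts = M.numProducts
  | 0 => rfl
  | t + 1 => by
    simp [OpMon.iterateL, OpMon.single, OpMon.numProducts, OpAtomVec.numProducts,
      OpAtom.numProducts, OpMon.iterateL_numProducts M t]

theorem OpMon.iterateL_mulChains_inj (hn : 2 ≤ n) :
    ∀ {s t : ℕ} {f g : Fin n → ℕ},
      (OpMon.mulChains (by omega) f).iterateL s = (OpMon.mulChains (by omega) g).iterateL t ↔
        s = t ∧ f = g
  | 0, 0, _, _ => ⟨fun h => ⟨rfl, OpMon.mulChains_injective _ h⟩, by rintro ⟨-, rfl⟩; rfl⟩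
  | 0, _ + 1, _, _ | _ + 1, 0, _, _ => by
    simp only [OpMon.iterateL, OpMon.mulChains, OpMon.single, OpMon.mk.injEq]
    omega
  | s + 1, t + 1, f, g => by
    simp only [OpMon.iterateL, OpMon.single, OpMon.mk.injEq, OpAtomVec.cons.injEq,
      OpAtom.op.injEq, heq_eq_eq, true_and, and_true, Nat.add_right_cancel_iff]
    exact OpMon.iterateL_mulChains_inj hn

def OpAtomVec.Forall (p : OpAtom n → Prop) : {k : ℕ} → OpAtomVec n k → Prop
  | _, .nil => True
  | _, .cons a v => p a ∧ v.Forall p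

def OpAtom.LowProductsForm (hn : 1 ≤ n) (A : OpAtom n) : Prop :=
  (A.numProducts = 0 → A = .chain A.mult) ∧
    (A.numProducts = 1 → ∃ t f, A = .op ((OpMon.mulChains hn f).iterateL t))

def OpMon.LowProductsForm (hn : 1 ≤ n) (M : OpMon n) : Prop :=
  (M.numProducts = 0 → M = .single (.chain M.mult)) ∧
    (M.numProducts = 1 → ∃ t f, M = (OpMon.mulChains hn f).iterateL t)

theorem OpAtomVec.exists_eq_chains_of_numProducts_eq_zero {hn : 1 ≤ n} :
    ∀ {k : ℕ} (v : OpAtomVec n k), v.Forall (OpAtom.LowProductsForm hn) →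
      v.numProducts = 0 → ∃ f, v = .chains f
  | _, .nil, _, _ => ⟨Fin.elim0, rfl⟩
  | _, .cons a v, hav, h => by
    simp only [OpAtomVec.numProducts, Nat.add_eq_zero_iff] at h
    obtain ⟨f, rfl⟩ := v.exists_eq_chains_of_numProducts_eq_zero hav.2 h.2
    refine ⟨Fin.cons a.mult f, ?_⟩
    rw [hav.1.1 h.1]
    simp [OpAtomVec.chains, OpAtom.chain_mult]

mutual
theorem OpAtom.lowProductsForm (hn : 1 ≤ n) : ∀ A : OpAtom n, A.LowProductsForm hn
  | .star => ⟨fun _ => rfl, fun h => absurd h (by simp [OpAtom.numProducts])⟩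
  | .op M => by
    obtain ⟨h0, h1⟩ := OpMon.lowProductsForm hn M
    refine ⟨fun h => ?_, fun h => ?_⟩
    · rw [OpAtom.mult, add_comm, OpAtom.chain, ← h0 h]
    · obtain ⟨t, f, rfl⟩ := h1 h
      exact ⟨t, f, rfl⟩

theorem OpAtomVec.forall_lowProductsForm (hn : 1 ≤ n) :
    ∀ {k : ℕ} (v : OpAtomVec n k), v.Forall (OpAtom.LowProductsForm hn)
  | _, .nil => trivial
  | _, .cons a v => ⟨OpAtom.lowProductsForm hn a, OpAtomVec.forall_lowProductsForm hn v⟩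

theorem OpMon.lowProductsForm (hn : 1 ≤ n) : ∀ M : OpMon n, M.LowProductsForm hn
  | .mk k hk1 hk v => by
    have hv := OpAtomVec.forall_lowProductsForm hn v
    have hlen := Nat.eq_mul_div_add_one_of_mod_eq hk1 hk
    simp only [OpMon.LowProductsForm, OpMon.numProducts, Nat.add_eq_zero_iff,
      Nat.add_eq_one_iff]
    refine ⟨fun ⟨hq, hv0⟩ => ?_, fun h => ?_⟩
    · obtain rfl : k = 1 := by rwa [hq, mul_zero] at hlen
      obtain ⟨f, rfl⟩ := v.exists_eq_chains_of_numProducts_eq_zero hv hv0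
      simp [OpMon.mult, OpAtomVec.mult, OpAtomVec.chains, OpAtom.chain_mult, OpMon.single]
    · rcases h with ⟨hq, hv1⟩ | ⟨hq, hv0⟩
      · obtain rfl : k = 1 := by rwa [hq, mul_zero] at hlen
        rcases v with _ | ⟨a, _ | _⟩
        obtain ⟨t, f, rfl⟩ := hv.1.2 (by simpa [OpAtomVec.numProducts] using hv1)
        exact ⟨t + 1, f, rfl⟩
      · obtain rfl : k = n := by rw [hq] at hlen; omega
        obtain ⟨f, rfl⟩ := v.exists_eq_chains_of_numProducts_eq_zero hv hv0
        exact ⟨0, f, rfl⟩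
end

def OpMon.ofExponents (hn : 1 ≤ n) (g : Fin (n + 1) → ℕ) : OpMon n :=
  (OpMon.mulChains hn (Fin.tail g)).iterateL (g 0)

theorem OpMon.ofExponents_mult (hn : 1 ≤ n) (g : Fin (n + 1) → ℕ) :
    (OpMon.ofExponents hn g).mult = ∑ i, g i := by
  rw [OpMon.ofExponents, OpMon.iterateL_mult, OpMon.mulChains_mult, Fin.sum_univ_succ]
  rfl

theorem OpMon.bijOn_ofExponents (hn : 2 ≤ n) (m : ℕ) :
    Set.BijOn (OpMon.ofExponents (by omega)) {g | ∑ i, g i = m}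
      {M : OpMon n | M.numProducts = 1 ∧ M.mult = m} := by
  have hn1 : 1 ≤ n := by omega
  refine ⟨fun g hg => ⟨?_, ?_⟩, fun g _ g' _ h => ?_, fun M hM => ?_⟩
  · rw [OpMon.ofExponents, OpMon.iterateL_numProducts, OpMon.mulChains_numProducts hn]
  · rw [OpMon.ofExponents_mult]
    exact hg
  · obtain ⟨h0, ht⟩ := (OpMon.iterateL_mulChains_inj hn).1 h
    rw [← Fin.cons_self_tail g, ← Fin.cons_self_tail g', h0, ht]
  · obtain ⟨t, f, rfl⟩ := (OpMon.lowProductsForm hn1 M).2 hM.1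
    refine ⟨Fin.cons t f, ?_, by simp [OpMon.ofExponents]⟩
    rw [Set.mem_ofPred_eq, ← OpMon.ofExponents_mult hn1, ← hM.2]
    simp [OpMon.ofExponents]

theorem OpMon.card_weight_eq_add_one_mult_eq (hn : 2 ≤ n) (m : ℕ) :
    Nat.card {M : OpMon n | M.weight = m + 1 ∧ M.mult = m} = (m + n).choose n := by
  have hset : {M : OpMon n | M.weight = m + 1 ∧ M.mult = m} =
      {M : OpMon n | M.numProducts = 1 ∧ M.mult = m} := by
    ext M
    simp only [Set.mem_ofPred_eq, OpMon.weight_eq_mult_add_numProducts]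
    omega
  calc Nat.card {M : OpMon n | M.weight = m + 1 ∧ M.mult = m}
      = Nat.card {g : Fin (n + 1) → ℕ // ∑ i, g i = m} := by
        rw [hset]
        exact (Nat.card_congr (OpMon.bijOn_ofExponents hn m).equiv).symm
    _ = Nat.card (Sym (Fin (n + 1)) m) :=
        Nat.card_congr (Sym.equivNatSumOfFintype (Fin (n + 1)) m).symm
    _ = (m + n).choose n := by
        rw [Sym.natCard_sym_eq_choose, Nat.card_fin, Nat.add_right_comm, Nat.add_sub_cancel,
          add_comm n m, Nat.choose_symm_add]

end

/-- For every integer `w ≥ 1`, the number of ternary (`n = 3`) operator monomials of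
weight `w` and multiplicity `w - 1` equals the tetrahedral number `C(w+2, 3)`. -/
theorem stmt_12 (w : ℕ) (hw : 1 ≤ w) :
    Nat.card {M : OpMon 3 | M.weight = w ∧ M.mult = w - 1} = Nat.choose (w + 2) 3 := by
  obtain ⟨m, rfl⟩ := Nat.exists_eq_add_of_le' hw
  simpa using OpMon.card_weight_eq_add_one_mult_eq (by norm_num : 2 ≤ 3) m
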